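/- Let α, β, θ > 0, λ ∈ [−1,1], and r ∈ ℕ. Then the r-th moment of the generalized transmuted Weibull distribution satisfies ∫₀^∞ x^r · θαβ x^{α−1} e^{−βx^α}(1 − e^{−βx^α})^{θ−1}[1 + λ − 2λ(1 − e^{−βx^α})^θ] dx = Σ_{i=0}^∞ (−1)^i [(1+λ)·C(θ−1,i) − 2λ·C(2θ−1,i)] · θ · Γ(r/α + 1) / (β^{r/α} (i+1)^{r/α + 1}), where Γ is the Gamma function. -/

import Mathlib

/-!
Put `u = exp (-β x^α) ∈ (0, 1)`. By the binomial series,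
`u (1-u)^(θ-1) (1 + λ - 2λ(1-u)^θ) = Σ_i (-1)^i [(1+λ) C(θ-1,i) - 2λ C(2θ-1,i)] u^(i+1)`,
and `u^(i+1) = exp (-(i+1) β x^α)`, so `x^r f(x)` expands into a series of Weibull-type terms
`x^(r+α-1) exp (-(i+1) β x^α)`, each integrating to a Gamma value.
Termwise integration is justified by absolute summability: the `i`-th integral of norms is
`O(|C(a,i)| / (i+1))` with `a ∈ {θ-1, 2θ-1}`, and `|C(a,i)| / (i+1) = |C(a+1,i+1)| / (a+1)` is
summable because `Σ |C(b,n)| < ∞` for `b > 0`.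
-/

open Real MeasureTheory

/-- Generalized binomial coefficient `C(a,k) = a(a−1)⋯(a−k+1)/k!`. -/
noncomputable def genChoose (a : ℝ) (k : ℕ) : ℝ :=
  (∏ i ∈ Finset.range k, (a - i)) / (Nat.factorial k)

lemma genChoose_eq_ringChoose (a : ℝ) (n : ℕ) : genChoose a n = Ring.choose a n := by
  rw [Ring.choose_eq_smul, ← Polynomial.aeval_eq_smeval, ← Polynomial.eval_map_algebraMap,
    descPochhammer_map, descPochhammer_eval_eq_prod_range, genChoose, smul_eq_mul, div_eq_inv_mul]

theorem hasSum_genChoose_mul_pow (a : ℝ) {x : ℝ} (hx : |x| < 1) :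
    HasSum (fun n => genChoose a n * x ^ n) ((1 + x) ^ a) := by
  have h := one_add_rpow_hasFPowerSeriesOnBall_zero (a := a) |>.hasSum (y := x)
    (by simpa [Metric.mem_eball, edist_dist] using hx)
  simpa [genChoose_eq_ringChoose, binomialSeries, FormalMultilinearSeries.coeff_ofScalars,
    mul_comm] using h

lemma genChoose_succ_mul (a : ℝ) (n : ℕ) :
    genChoose a (n + 1) * (n + 1) = genChoose a n * (a - n) := by
  have := Nat.factorial_ne_zero n
  simp only [genChoose, Finset.prod_range_succ, Nat.factorial_succ]
  push_cast
  field_simp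

lemma genChoose_add_one_succ_mul (a : ℝ) (n : ℕ) :
    genChoose (a + 1) (n + 1) * (n + 1) = (a + 1) * genChoose a n := by
  have := Nat.factorial_ne_zero n
  simp only [genChoose, Finset.prod_range_succ', Nat.factorial_succ]
  push_cast
  field_simp
  simp only [add_sub_add_right_eq_sub, sub_zero]
  ring

lemma abs_genChoose_succ_mul {a : ℝ} {n : ℕ} (h : a ≤ n) :
    |genChoose a (n + 1)| * (n + 1) = |genChoose a n| * (n - a) := by
  have := congrArg abs (genChoose_succ_mul a n)
  rwa [abs_mul, abs_mul, abs_of_pos (a := (n : ℝ) + 1) (by positivity),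
    abs_of_nonpos (a := a - n) (by linarith), neg_sub] at this

/-- For `n ≥ b` the recursion reads `b |C(b,n)| = n |C(b,n)| - (n+1) |C(b,n+1)|`, so the partial
sums of `b |C(b,n)|` telescope and stay bounded by `⌈b⌉ |C(b,⌈b⌉)|`. -/
theorem summable_abs_genChoose {b : ℝ} (hb : 0 < b) : Summable fun n => |genChoose b n| := by
  set N := ⌈b⌉₊
  set e : ℕ → ℝ := fun n => |genChoose b (n + N)|
  set w : ℕ → ℝ := fun n => (n + N : ℕ) * e n
  have hstep : ∀ n, b * e n = w n - w (n + 1) := by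
    intro n
    have h := abs_genChoose_succ_mul ((Nat.le_ceil b).trans (Nat.cast_le.2 (Nat.le_add_left N n)))
    simp only [w, e, Nat.add_right_comm n 1 N]
    push_cast at h ⊢
    linarith
  rw [← summable_nat_add_iff N]
  refine summable_of_sum_range_le (c := w 0 / b) (fun n => abs_nonneg _) fun m => ?_
  have htel : b * ∑ n ∈ Finset.range m, e n = w 0 - w m := by
    rw [Finset.mul_sum, Finset.sum_congr rfl fun n _ => hstep n, Finset.sum_range_sub']
  have hwm : 0 ≤ w m := by positivity
  rw [le_div_iff₀ hb, mul_comm]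
  linarith

lemma summable_abs_genChoose_div_succ {a : ℝ} (ha : -1 < a) :
    Summable fun n : ℕ => |genChoose a n| / (n + 1) := by
  have hb : 0 < a + 1 := by linarith
  refine ((summable_nat_add_iff 1).2 (summable_abs_genChoose hb)).div_const (a + 1) |>.congr
    fun n => ?_
  have h := congrArg abs (genChoose_add_one_succ_mul a n)
  rw [abs_mul, abs_mul, abs_of_pos hb, abs_of_pos (a := (n : ℝ) + 1) (by positivity)] at h
  field_simp
  linarith

lemma integral_rpow_mul_exp_neg_mul_rpow_eq {α b s : ℝ} (hα : 0 < α) (hb : 0 < b)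
    (hs : -α < s) :
    ∫ x in Set.Ioi 0, x ^ (s + α - 1) * exp (-b * x ^ α) =
      Gamma (s / α + 1) / (α * b ^ (s / α + 1)) := by
  have hexp : (s + α - 1 + 1) / α = s / α + 1 := by field_simp; ring
  rw [integral_rpow_mul_exp_neg_mul_rpow hα (by linarith) hb, neg_div, hexp, rpow_neg hb.le]
  field_simp

theorem integral_tsum_rpow_mul_exp_neg_mul_rpow {α β s : ℝ} (hα : 0 < α) (hβ : 0 < β)
    (hs : 0 ≤ s) {c : ℕ → ℝ} (hc : Summable fun i : ℕ => |c i| / (i + 1)) :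
    ∫ x in Set.Ioi 0, ∑' i : ℕ, c i * (x ^ (s + α - 1) * exp (-((i + 1) * β) * x ^ α)) =
      ∑' i : ℕ, c i * (Gamma (s / α + 1) / (α * ((i + 1) * β) ^ (s / α + 1))) := by
  set F : ℕ → ℝ → ℝ := fun i x => c i * (x ^ (s + α - 1) * exp (-((i + 1) * β) * x ^ α))
  have hb : ∀ i : ℕ, 0 < ((i : ℝ) + 1) * β := fun i => by positivity
  have hF_integral : ∀ i, ∫ x in Set.Ioi 0, F i x =
      c i * (Gamma (s / α + 1) / (α * ((i + 1) * β) ^ (s / α + 1))) := fun i => by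
    rw [integral_const_mul, integral_rpow_mul_exp_neg_mul_rpow_eq hα (hb i) (by linarith)]
  have hF_norm : ∀ i, ∫ x in Set.Ioi 0, ‖F i x‖ =
      |c i| * (Gamma (s / α + 1) / (α * ((i + 1) * β) ^ (s / α + 1))) := fun i => by
    rw [← integral_rpow_mul_exp_neg_mul_rpow_eq hα (hb i) (by linarith), ← integral_const_mul]
    refine setIntegral_congr_fun measurableSet_Ioi fun x (hx : 0 < x) => ?_
    rw [norm_mul, Real.norm_eq_abs, Real.norm_of_nonneg (by positivity)]
  have hF_sum : Summable fun i => ∫ x in Set.Ioi 0, ‖F i x‖ := by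
    simp_rw [hF_norm]
    refine (hc.mul_right (Gamma (s / α + 1) / (α * β ^ (s / α + 1)))).of_nonneg_of_le
      (fun i => by positivity) fun i => ?_
    have hpow : ((i : ℝ) + 1) * β ^ (s / α + 1) ≤ ((i + 1) * β) ^ (s / α + 1) := by
      rw [mul_rpow (by positivity) hβ.le]
      gcongr
      exact self_le_rpow_of_one_le (by simp) (by linarith [div_nonneg hs hα.le])
    calc |c i| * (Gamma (s / α + 1) / (α * ((i + 1) * β) ^ (s / α + 1)))
        ≤ |c i| * (Gamma (s / α + 1) / (α * ((i + 1) * β ^ (s / α + 1)))) := by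
          gcongr
      _ = |c i| / (i + 1) * (Gamma (s / α + 1) / (α * β ^ (s / α + 1))) := by
          field_simp
  rw [← integral_tsum_of_summable_integral_norm (fun i => ?_) hF_sum]
  · exact tsum_congr hF_integral
  · exact (integrableOn_rpow_mul_exp_neg_mul_rpow (by linarith) hα (hb i)).const_mul _

noncomputable def gtwCoeff (θ lam : ℝ) (i : ℕ) : ℝ :=
  (-1) ^ i * ((1 + lam) * genChoose (θ - 1) i - 2 * lam * genChoose (2 * θ - 1) i)

theorem hasSum_gtwCoeff_mul_pow_succ (θ lam : ℝ) {u : ℝ} (hu : |u| < 1) :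
    HasSum (fun i => gtwCoeff θ lam i * u ^ (i + 1))
      (u * (1 - u) ^ (θ - 1) * (1 + lam - 2 * lam * (1 - u) ^ θ)) := by
  have hu' : |-u| < 1 := by rwa [abs_neg]
  have h := ((hasSum_genChoose_mul_pow (θ - 1) hu').mul_left (1 + lam) |>.sub
    ((hasSum_genChoose_mul_pow (2 * θ - 1) hu').mul_left (2 * lam))).mul_left u
  have h1u : 0 < 1 - u := by linarith [le_abs_self u]
  have hval : u * (1 - u) ^ (θ - 1) * (1 + lam - 2 * lam * (1 - u) ^ θ) =
      u * ((1 + lam) * (1 + -u) ^ (θ - 1) - 2 * lam * (1 + -u) ^ (2 * θ - 1)) := by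
    rw [← sub_eq_add_neg, show 2 * θ - 1 = (θ - 1) + θ by ring, rpow_add h1u]
    ring
  have hterm : (fun i => gtwCoeff θ lam i * u ^ (i + 1)) = fun i =>
      u * ((1 + lam) * (genChoose (θ - 1) i * (-u) ^ i) -
        2 * lam * (genChoose (2 * θ - 1) i * (-u) ^ i)) := by
    funext i
    rw [gtwCoeff, neg_pow u, pow_succ]
    ring
  rwa [hval, hterm]

lemma summable_abs_gtwCoeff_div_succ {θ : ℝ} (hθ : 0 < θ) (lam : ℝ) :
    Summable fun i : ℕ => |gtwCoeff θ lam i| / (i + 1) := by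
  refine (((summable_abs_genChoose_div_succ (a := θ - 1) (by linarith)).mul_left |1 + lam|).add
    ((summable_abs_genChoose_div_succ (a := 2 * θ - 1) (by linarith)).mul_left |2 * lam|))
    |>.of_nonneg_of_le (fun i => by positivity) fun i => ?_
  rw [gtwCoeff, abs_mul, abs_pow, abs_neg, abs_one, one_pow, one_mul, ← mul_div_assoc,
    ← mul_div_assoc, ← add_div]
  gcongr
  exact (abs_sub _ _).trans_eq (by rw [abs_mul, abs_mul])

lemma gtw_moment_integrand_eq_tsum {α β : ℝ} (θ lam : ℝ) (r : ℕ) (hβ : 0 < β) {x : ℝ}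
    (hx : 0 < x) :
    x ^ r * (θ * α * β * x ^ (α - 1) * exp (-β * x ^ α) * (1 - exp (-β * x ^ α)) ^ (θ - 1) *
      (1 + lam - 2 * lam * (1 - exp (-β * x ^ α)) ^ θ)) =
    ∑' i : ℕ, θ * α * β * gtwCoeff θ lam i *
      (x ^ ((r : ℝ) + α - 1) * exp (-((i + 1) * β) * x ^ α)) := by
  have hu : |exp (-β * x ^ α)| < 1 := by
    rw [abs_of_pos (exp_pos _), exp_lt_one_iff, neg_mul, neg_lt_zero]
    positivity
  have h := (hasSum_gtwCoeff_mul_pow_succ θ lam hu).mul_left (θ * α * β * x ^ ((r : ℝ) + α - 1))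
  convert h.tsum_eq.symm using 1
  · simp only [rpow_sub_one hx.ne', rpow_add hx, rpow_natCast]
    ring
  · refine tsum_congr fun i => ?_
    rw [← exp_nat_mul,
      show -((i + 1 : ℝ) * β) * x ^ α = (i + 1 : ℕ) * (-β * x ^ α) by push_cast; ring]
    ring

theorem gtw_moment_general (α β θ lam : ℝ) (r : ℕ)
    (hα : 0 < α) (hβ : 0 < β) (hθ : 0 < θ) :
    ∫ x in Set.Ioi (0 : ℝ),
        x ^ r *
          (θ * α * β * x ^ (α - 1) * Real.exp (-β * x ^ α) *
            (1 - Real.exp (-β * x ^ α)) ^ (θ - 1) *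
            (1 + lam - 2 * lam * (1 - Real.exp (-β * x ^ α)) ^ θ)) =
      ∑' i : ℕ,
        (-1 : ℝ) ^ i *
          ((1 + lam) * genChoose (θ - 1) i - 2 * lam * genChoose (2 * θ - 1) i) *
          θ * Real.Gamma ((r : ℝ) / α + 1) /
          (β ^ ((r : ℝ) / α) * ((i : ℝ) + 1) ^ ((r : ℝ) / α + 1)) := by
  have hc : Summable fun i : ℕ => |θ * α * β * gtwCoeff θ lam i| / (i + 1) := by
    simpa only [abs_mul, mul_div_assoc] using
      (summable_abs_gtwCoeff_div_succ hθ lam).mul_left |θ * α * β|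
  rw [setIntegral_congr_fun measurableSet_Ioi fun x hx =>
      gtw_moment_integrand_eq_tsum θ lam r hβ hx,
    integral_tsum_rpow_mul_exp_neg_mul_rpow hα hβ r.cast_nonneg hc]
  refine tsum_congr fun i => ?_
  rw [mul_rpow (by positivity) hβ.le, rpow_add_one hβ.ne', gtwCoeff]
  field_simp

/-- The `r`-th moment of the generalized transmuted Weibull distribution:
`∫₀^∞ x^r f(x) dx = Σ_{i=0}^∞ (−1)^i [(1+λ)C(θ−1,i) − 2λC(2θ−1,i)]
  θ Γ(r/α + 1) / (β^{r/α} (i+1)^{r/α+1})`. -/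
theorem gtw_moment (α β θ lam : ℝ) (r : ℕ)
    (hα : 0 < α) (hβ : 0 < β) (hθ : 0 < θ)
    (hlam : lam ∈ Set.Icc (-1 : ℝ) 1) :
    ∫ x in Set.Ioi (0 : ℝ),
        x ^ r *
          (θ * α * β * x ^ (α - 1) * Real.exp (-β * x ^ α) *
            (1 - Real.exp (-β * x ^ α)) ^ (θ - 1) *
            (1 + lam - 2 * lam * (1 - Real.exp (-β * x ^ α)) ^ θ)) =
      ∑' i : ℕ,
        (-1 : ℝ) ^ i *
          ((1 + lam) * genChoose (θ - 1) i - 2 * lam * genChoose (2 * θ - 1) i) *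
          θ * Real.Gamma ((r : ℝ) / α + 1) /
          (β ^ ((r : ℝ) / α) * ((i : ℝ) + 1) ^ ((r : ℝ) / α + 1)) :=
  gtw_moment_general α β θ lam r hα hβ hθ
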